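/- arXiv:2605.03886 — 3 statements merged into one kernel-verified Lean document; each statement's English description precedes it below -/
import Mathlib

section
/- Let N ≥ 2 and 1 ≤ m ≤ N - 1 be integers, and set q* = m/N. Then the binomial probability mass satisfies C(N, m)·(q*)^m·(1-q*)^{N-m} ≤ 1/√(2π·N·q*·(1-q*)), with strict inequality. -/
/-!
Write `n! = s(n) √(2n) (n/e)^n`, where `s = Stirling.stirlingSeq` decreases strictly to `√π`.
The powers of `n/e` cancel exactly against `q*^m (1-q*)^(N-m)`, so the binomial mass equals
`s(N) / (s(m) s(N-m))` times `√(N / (2 m (N-m)))`, and the claim becomes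
`√π s(N) < s(m) s(N-m)`: this holds because `s(N) ≤ s(m)` and `√π < s(N-m)`.
-/

open Real
open scoped Nat

namespace Stirling

theorem factorial_eq_stirlingSeq_mul {n : ℕ} (hn : n ≠ 0) :
    (n ! : ℝ) = stirlingSeq n * (√(2 * n) * (n / exp 1) ^ n) := by
  rw [stirlingSeq, div_mul_cancel₀]
  positivity

theorem stirlingSeq_pos {n : ℕ} (hn : n ≠ 0) : 0 < stirlingSeq n := by
  obtain ⟨n, rfl⟩ := Nat.exists_eq_succ_of_ne_zero hn
  exact stirlingSeq'_pos n

theorem stirlingSeq_succ_succ_lt (n : ℕ) : stirlingSeq (n + 2) < stirlingSeq (n + 1) := by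
  have hsum := log_stirlingSeq_sdiff_hasSum n
  have hlog : log (stirlingSeq (n + 2)) < log (stirlingSeq (n + 1)) :=
    sub_pos.mp <|
      hasSum_lt (f := 0) (i := 0) (fun _ => by positivity) (by positivity) hasSum_zero hsum
  exact (log_lt_log_iff (stirlingSeq'_pos (n + 1)) (stirlingSeq'_pos n)).mp hlog

theorem sqrt_pi_lt_stirlingSeq {n : ℕ} (hn : n ≠ 0) : √π < stirlingSeq n := by
  obtain ⟨n, rfl⟩ := Nat.exists_eq_succ_of_ne_zero hn
  exact (sqrt_pi_le_stirlingSeq (n := n + 2) (by omega)).trans_lt (stirlingSeq_succ_succ_lt n)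

theorem stirlingSeq_le_of_le {m n : ℕ} (hm : m ≠ 0) (hmn : m ≤ n) :
    stirlingSeq n ≤ stirlingSeq m := by
  obtain ⟨m, rfl⟩ := Nat.exists_eq_succ_of_ne_zero hm
  obtain ⟨n, rfl⟩ := Nat.exists_eq_succ_of_ne_zero (by omega : n ≠ 0)
  exact stirlingSeq'_antitone (Nat.succ_le_succ_iff.mp hmn)

theorem stirlingSeq_add_div_mul_lt {m k : ℕ} (hm : m ≠ 0) (hk : k ≠ 0) :
    stirlingSeq (m + k) / (stirlingSeq m * stirlingSeq k) < 1 / √π := by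
  rw [div_lt_div_iff₀ (mul_pos (stirlingSeq_pos hm) (stirlingSeq_pos hk)) (by positivity)]
  calc stirlingSeq (m + k) * √π < stirlingSeq (m + k) * stirlingSeq k :=
        mul_lt_mul_of_pos_left (sqrt_pi_lt_stirlingSeq hk) (stirlingSeq_pos (by omega))
    _ ≤ stirlingSeq m * stirlingSeq k := by
        gcongr
        · exact (stirlingSeq_pos hk).le
        · exact stirlingSeq_le_of_le hm (Nat.le_add_right m k)
    _ = 1 * (stirlingSeq m * stirlingSeq k) := (one_mul _).symm

theorem choose_mul_div_pow_mul_div_pow_eq {m k : ℕ} (hm : m ≠ 0) (hk : k ≠ 0) :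
    ((m + k).choose m : ℝ) * (m / (m + k : ℝ)) ^ m * (k / (m + k : ℝ)) ^ k =
      stirlingSeq (m + k) / (stirlingSeq m * stirlingSeq k) * √((m + k) / (2 * m * k)) := by
  have hsqrt : √((m + k) / (2 * m * k) : ℝ) = √(2 * (m + k)) / (√(2 * m) * √(2 * k)) := by
    rw [← sqrt_mul (by positivity), ← sqrt_div' _ (by positivity)]
    congr 1
    field_simp
  rw [Nat.cast_choose ℝ (Nat.le_add_right m k), Nat.add_sub_cancel_left,
    factorial_eq_stirlingSeq_mul (by omega : m + k ≠ 0), factorial_eq_stirlingSeq_mul hm,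
    factorial_eq_stirlingSeq_mul hk, hsqrt]
  simp only [Nat.cast_add, div_pow, pow_add]
  have := stirlingSeq_pos hm
  have := stirlingSeq_pos hk
  field_simp

end Stirling

theorem stmt_15_general (N m : ℕ) (hm1 : 1 ≤ m) (hmN : m ≤ N - 1) :
    (N.choose m : ℝ) * ((m : ℝ) / (N : ℝ)) ^ m *
        (1 - (m : ℝ) / (N : ℝ)) ^ (N - m) <
      1 / Real.sqrt (2 * π * (N : ℝ) * ((m : ℝ) / (N : ℝ)) *
        (1 - (m : ℝ) / (N : ℝ))) := by
  obtain ⟨k, rfl⟩ : ∃ k, N = m + k := ⟨N - m, by omega⟩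
  have hm : m ≠ 0 := by omega
  have hk : k ≠ 0 := by omega
  have hq : 1 - (m : ℝ) / (m + k) = k / (m + k) := by field_simp; ring
  have hrhs : 1 / √(2 * π * (m + k) * (m / (m + k)) * (k / (m + k))) =
      1 / √π * √((m + k) / (2 * m * k)) := by
    rw [show 2 * π * (m + k) * (m / (m + k)) * (k / (m + k)) = π / ((m + k) / (2 * m * k)) by
      field_simp, sqrt_div' _ (by positivity), one_div_div, div_eq_inv_mul, one_div]
  rw [Nat.add_sub_cancel_left, Nat.cast_add, hq,
    Stirling.choose_mul_div_pow_mul_div_pow_eq hm hk, hrhs]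
  exact mul_lt_mul_of_pos_right (Stirling.stirlingSeq_add_div_mul_lt hm hk) (by positivity)

/-- For N ≥ 2 and 1 ≤ m ≤ N-1, with q* = m/N, the binomial mass satisfies
C(N,m)·(q*)^m·(1-q*)^{N-m} < 1/√(2π·N·q*·(1-q*)). -/
theorem stmt_15 (N m : ℕ) (hN : 2 ≤ N) (hm1 : 1 ≤ m) (hmN : m ≤ N - 1) :
    (N.choose m : ℝ) * ((m : ℝ) / (N : ℝ)) ^ m *
        (1 - (m : ℝ) / (N : ℝ)) ^ (N - m) <
      1 / Real.sqrt (2 * π * (N : ℝ) * ((m : ℝ) / (N : ℝ)) *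
        (1 - (m : ℝ) / (N : ℝ))) :=
  stmt_15_general N m hm1 hmN
end

section
/- Let α ∈ (0,1), B ≥ 1, and suppose k := ⌊(B+1)α⌋ - 1 satisfies 0 ≤ k ≤ B - 1. Then for every q ∈ [0,1], q·C(B,k)·q^k·(1-q)^{B-k} ≤ (1/√(2π(B+1)))·√(α/(1-α)). -/
/-!
Write `j = k + 1` and `m = B - k`, so `q · C(B, k) q^k (1-q)^{B-k} = j/(B+1) · C(B+1, j) q^j (1-q)^m`.
By weighted AM-GM, `q^j (1-q)^m` is largest at the mode `q = j/(j+m)`, and there Stirling's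
formula gives `C(j+m, j) (j/(j+m))^j (m/(j+m))^m ≤ √((j+m)/(2π j m))`: the Stirling sequence
`n! / (√(2n) (n/e)^n)` decreases to `√π`, so `s(j+m) ≤ s(j)` and `√π ≤ s(m)`. This leaves
`√(j/m) / √(2π(B+1))`, and `j ≤ (B+1)α` (the floor) gives `j/m ≤ α/(1-α)`.
-/

open Real

namespace Stirling

lemma stirlingSeq_add_le {j : ℕ} (hj : j ≠ 0) (m : ℕ) : stirlingSeq (j + m) ≤ stirlingSeq j := by
  obtain ⟨i, rfl⟩ := Nat.exists_eq_succ_of_ne_zero hj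
  simpa [Nat.succ_add] using stirlingSeq'_antitone (Nat.le_add_right i m)

lemma sqrt_pi_mul_stirlingSeq_add_le {j m : ℕ} (hj : j ≠ 0) (hm : m ≠ 0) :
    √π * stirlingSeq (j + m) ≤ stirlingSeq j * stirlingSeq m := by
  rw [mul_comm]
  exact mul_le_mul (stirlingSeq_add_le hj m) (sqrt_pi_le_stirlingSeq hm) (sqrt_nonneg π)
    ((sqrt_pos.2 pi_pos).trans_le (sqrt_pi_le_stirlingSeq hj)).le

lemma choose_mul_pow_mul_pow_eq {j m : ℕ} (hj : j ≠ 0) (hm : m ≠ 0) :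
    ((j + m).choose j : ℝ) * ((j : ℝ) / (j + m)) ^ j * ((m : ℝ) / (j + m)) ^ m =
      stirlingSeq (j + m) / (stirlingSeq j * stirlingSeq m) * √((j + m) / (2 * j * m)) := by
  have hsqrt : √(((j : ℝ) + m) / (2 * j * m)) = √(2 * (j + m)) / (√(2 * j) * √(2 * m)) := by
    rw [← sqrt_mul (by positivity), ← sqrt_div (by positivity)]
    congr 1
    field_simp
  have hchoose := Nat.cast_choose ℝ (Nat.le_add_right j m)
  rw [Nat.add_sub_cancel_left] at hchoose
  rw [hsqrt, hchoose]
  simp only [stirlingSeq, div_pow, Nat.cast_add, pow_add]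
  field_simp

end Stirling

open Stirling in
lemma choose_mul_pow_mul_pow_le {j m : ℕ} (hj : j ≠ 0) (hm : m ≠ 0) :
    ((j + m).choose j : ℝ) * ((j : ℝ) / (j + m)) ^ j * ((m : ℝ) / (j + m)) ^ m ≤
      √((j + m) / (2 * π * j * m)) := by
  have hπ : 0 < √π := sqrt_pos.2 pi_pos
  have hsj := (sqrt_pi_le_stirlingSeq hj).trans_lt' hπ
  have hsm := (sqrt_pi_le_stirlingSeq hm).trans_lt' hπ
  calc _ = stirlingSeq (j + m) / (stirlingSeq j * stirlingSeq m) * √((j + m) / (2 * j * m)) :=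
        choose_mul_pow_mul_pow_eq hj hm
    _ ≤ 1 / √π * √((j + m) / (2 * j * m)) := by
        refine mul_le_mul_of_nonneg_right ?_ (sqrt_nonneg _)
        rw [div_le_div_iff₀ (by positivity) hπ, one_mul, mul_comm]
        exact sqrt_pi_mul_stirlingSeq_add_le hj hm
    _ = √((j + m) / (2 * π * j * m)) := by
        rw [one_div, ← sqrt_inv, ← sqrt_mul (inv_nonneg.2 pi_pos.le)]
        congr 1
        field_simp

lemma pow_mul_one_sub_pow_le {j m : ℕ} (hj : j ≠ 0) (hm : m ≠ 0) {q : ℝ} (hq : q ∈ Set.Icc 0 1) :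
    q ^ j * (1 - q) ^ m ≤ ((j : ℝ) / (j + m)) ^ j * ((m : ℝ) / (j + m)) ^ m := by
  obtain ⟨hq0, hq1⟩ := hq
  have hja : (j : ℝ) / (j + m) * (j + m) = j := div_mul_cancel₀ _ (by positivity)
  have hmb : (m : ℝ) / (j + m) * (j + m) = m := div_mul_cancel₀ _ (by positivity)
  have hab : (j : ℝ) / (j + m) + m / (j + m) = 1 := by field_simp
  have ha : (0 : ℝ) < j / (j + m) := by positivity
  have hb : (0 : ℝ) < m / (j + m) := by positivity
  generalize (j : ℝ) / (j + m) = a at *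
  generalize (m : ℝ) / (j + m) = b at *
  -- weighted AM-GM at the points `q / a` and `(1 - q) / b`, whose weighted mean is `1`
  have hamgm : (q / a) ^ a * ((1 - q) / b) ^ b ≤ 1 := by
    have := geom_mean_le_arith_mean2_weighted ha.le hb.le (div_nonneg hq0 ha.le)
      (div_nonneg (sub_nonneg.2 hq1) hb.le) hab
    rwa [mul_div_cancel₀ _ ha.ne', mul_div_cancel₀ _ hb.ne', add_sub_cancel] at this
  have hpow : ∀ {x c : ℝ} {i : ℕ}, 0 ≤ x → c * ((j : ℝ) + m) = i →
      (x ^ c) ^ (j + m) = x ^ i := by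
    intro x c i hx hc
    rw [← rpow_natCast, ← rpow_mul hx, Nat.cast_add, hc, rpow_natCast]
  have key := pow_le_one₀ (n := j + m) (by positivity) hamgm
  rw [mul_pow, hpow (div_nonneg hq0 ha.le) hja,
    hpow (div_nonneg (sub_nonneg.2 hq1) hb.le) hmb] at key
  calc q ^ j * (1 - q) ^ m = (q / a) ^ j * ((1 - q) / b) ^ m * (a ^ j * b ^ m) := by
        rw [div_pow, div_pow, div_mul_div_comm, div_mul_cancel₀ _ (by positivity)]
    _ ≤ a ^ j * b ^ m := mul_le_of_le_one_left (by positivity) key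

lemma mul_choose_mul_pow_mul_pow_le (k : ℕ) {m : ℕ} (hm : m ≠ 0) {q : ℝ}
    (hq : q ∈ Set.Icc 0 1) :
    q * ((k + m).choose k * q ^ k * (1 - q) ^ m) ≤
      1 / √(2 * π * (k + m + 1)) * √((k + 1) / m) := by
  have hchoose : ((k + m).choose k : ℝ) = (k + 1) / (k + 1 + m) * (k + 1 + m).choose (k + 1) := by
    have := congrArg (Nat.cast (R := ℝ)) (Nat.add_one_mul_choose_eq (k + m) k)
    rw [Nat.add_right_comm] at this
    push_cast at this
    field_simp
    linarith
  have hj : k + 1 ≠ 0 := k.succ_ne_zero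
  have hmode := choose_mul_pow_mul_pow_le hj hm
  push_cast at hmode
  calc q * ((k + m).choose k * q ^ k * (1 - q) ^ m)
      = (k + 1) / (k + 1 + m) * ((k + 1 + m).choose (k + 1) * (q ^ (k + 1) * (1 - q) ^ m)) := by
        rw [hchoose]; ring
    _ ≤ (k + 1) / (k + 1 + m) * ((k + 1 + m).choose (k + 1) *
          (((k + 1 : ℕ) : ℝ) / ((k + 1 : ℕ) + m)) ^ (k + 1) * ((m : ℝ) / ((k + 1 : ℕ) + m)) ^ m) := by
        rw [mul_assoc ((k + 1 + m).choose (k + 1) : ℝ)]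
        gcongr _ * (_ * ?_)
        exact_mod_cast pow_mul_one_sub_pow_le hj hm hq
    _ ≤ (k + 1) / (k + 1 + m) * √((k + 1 + m) / (2 * π * (k + 1) * m)) := by
        gcongr
        push_cast
        exact hmode
    _ = 1 / √(2 * π * (k + m + 1)) * √((k + 1) / m) := by
        rw [← sqrt_sq (by positivity : (0 : ℝ) ≤ (k + 1) / (k + 1 + m)), ← sqrt_mul (by positivity),
          one_div, ← sqrt_inv, ← sqrt_mul (by positivity)]
        congr 1
        field_simp
        ring

theorem stmt_17_general (α : ℝ) (hα1 : α < 1) (B : ℕ)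
    (k : ℕ) (hk : (k : ℤ) = ⌊((B : ℝ) + 1) * α⌋ - 1) :
    ∀ q ∈ Set.Icc (0 : ℝ) 1,
      q * ((B.choose k : ℝ) * q ^ k * (1 - q) ^ (B - k)) ≤
        (1 / Real.sqrt (2 * π * ((B : ℝ) + 1))) * Real.sqrt (α / (1 - α)) := by
  intro q hq
  have hmode : (k + 1 : ℝ) ≤ (B + 1) * α := by
    have := Int.floor_le (((B : ℝ) + 1) * α)
    rw [show ⌊((B : ℝ) + 1) * α⌋ = k + 1 by omega] at this
    exact_mod_cast this
  have hkB : k < B := by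
    have : (k + 1 : ℝ) < B + 1 := hmode.trans_lt (mul_lt_of_lt_one_right (by positivity) hα1)
    exact_mod_cast (add_lt_add_iff_right 1).1 this
  obtain ⟨m, rfl⟩ := Nat.exists_eq_add_of_le hkB.le
  have hm : m ≠ 0 := by omega
  rw [Nat.add_sub_cancel_left]
  push_cast at hmode ⊢
  refine (mul_choose_mul_pow_mul_pow_le k hm hq).trans ?_
  -- `k + 1 ≤ (k + m + 1) α` says `(k + 1) / (k + m + 1) ≤ α`, i.e. `(k + 1) / m ≤ α / (1 - α)`
  gcongr _ * √?_
  rw [div_le_div_iff₀ (by positivity) (by linarith)]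
  linarith

/-- For α ∈ (0,1), B ≥ 1, and k = ⌊(B+1)α⌋ - 1 with 0 ≤ k ≤ B-1: for every
q ∈ [0,1], q·C(B,k)·q^k·(1-q)^{B-k} ≤ (1/√(2π(B+1)))·√(α/(1-α)). -/
theorem stmt_17 (α : ℝ) (hα0 : 0 < α) (hα1 : α < 1) (B : ℕ) (hB : 1 ≤ B)
    (k : ℕ) (hk : (k : ℤ) = ⌊((B : ℝ) + 1) * α⌋ - 1) (hkB : k ≤ B - 1) :
    ∀ q ∈ Set.Icc (0 : ℝ) 1,
      q * ((B.choose k : ℝ) * q ^ k * (1 - q) ^ (B - k)) ≤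
        (1 / Real.sqrt (2 * π * ((B : ℝ) + 1))) * Real.sqrt (α / (1 - α)) :=
  stmt_17_general α hα1 B k hk
end

section
/- Let α ∈ (0,1) and suppose Q is a random variable taking values in (0,1] with P(Q < 1) > 0. Define Pow(B) = E[F_{B,Q}(k_B)] where F_{B,q} is the Binomial(B,q) CDF and k_B = ⌊(B+1)α⌋ - 1. If B ≥ 2 satisfies k_B - k_{B-1} = 1 and k_{B+1} - k_B = 0, then Pow(B-1) < Pow(B) and Pow(B+1) < Pow(B); i.e., B is a strict local maximum of the power curve. -/
open MeasureTheory

/-- Binomial(n,q) probability mass at i. -/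
def binomPMF (n : ℕ) (q : ℝ) (i : ℕ) : ℝ :=
  (n.choose i : ℝ) * q ^ i * (1 - q) ^ (n - i)

/-- Binomial(n,q) CDF at an integer cutoff k (possibly negative). -/
def binomCDF (n : ℕ) (q : ℝ) (k : ℤ) : ℝ :=
  ∑ i ∈ Finset.range (k + 1).toNat, binomPMF n q i

/-- Integer critical count k_B = ⌊(B+1)α⌋ - 1. -/
noncomputable def critCount (α : ℝ) (B : ℕ) : ℤ := ⌊((B : ℝ) + 1) * α⌋ - 1

/-- Unconditional power Pow(B) = E[F_{B,Q}(k_B)]. -/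
noncomputable def power {Ω : Type*} [MeasurableSpace Ω] (μ : Measure Ω)
    (Q : Ω → ℝ) (α : ℝ) (B : ℕ) : ℝ :=
  ∫ ω, binomCDF B (Q ω) (critCount α B) ∂μ

lemma pmf_pascal (n K : ℕ) (q : ℝ) :
    binomPMF (n+1) q (K+1) = (1-q) * binomPMF n q (K+1) + q * binomPMF n q K := by
  unfold binomPMF
  rcases lt_or_ge K n with h | h
  · have h1 : n + 1 - (K+1) = (n - (K+1)) + 1 := by omega
    have h2 : n - K = (n - (K+1)) + 1 := by omega
    rw [Nat.choose_succ_succ, h1, h2]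
    push_cast
    ring
  · have h1 : n.choose (K+1) = 0 := Nat.choose_eq_zero_of_lt (by omega)
    have h2 : (n+1).choose (K+1) = n.choose K := by
      rw [Nat.choose_succ_succ, h1]; omega
    have h3 : n + 1 - (K + 1) = n - K := by omega
    rw [h1, h2, h3]
    push_cast
    ring

lemma cdf_succ (n K : ℕ) (q : ℝ) :
    ∑ i ∈ Finset.range (K+1), binomPMF (n+1) q i
      = (∑ i ∈ Finset.range (K+1), binomPMF n q i) - q * binomPMF n q K := by
  induction K with
  | zero => simp [binomPMF]; ring
  | succ K ih =>
      rw [Finset.sum_range_succ, Finset.sum_range_succ (f := binomPMF n q), ih, pmf_pascal]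
      ring

lemma pmf_nonneg (n : ℕ) {q : ℝ} (h0 : 0 ≤ q) (h1 : q ≤ 1) (i : ℕ) :
    0 ≤ binomPMF n q i := by
  unfold binomPMF
  have : (0:ℝ) ≤ 1 - q := by linarith
  positivity

lemma pmf_pos (n : ℕ) {q : ℝ} (h0 : 0 < q) (h1 : q < 1) {i : ℕ} (hi : i ≤ n) :
    0 < binomPMF n q i := by
  unfold binomPMF
  have hc : 0 < (n.choose i : ℝ) := by
    exact_mod_cast Nat.choose_pos hi
  have : (0:ℝ) < 1 - q := by linarith
  positivity

lemma pmf_le (n : ℕ) {q : ℝ} (h0 : 0 ≤ q) (h1 : q ≤ 1) (i : ℕ) :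
    binomPMF n q i ≤ (n.choose i : ℝ) := by
  unfold binomPMF
  have hq : q ^ i ≤ 1 := pow_le_one₀ h0 h1
  have hq' : (1 - q) ^ (n - i) ≤ 1 := pow_le_one₀ (by linarith) (by linarith)
  have h2 : q ^ i * (1 - q) ^ (n - i) ≤ 1 := by
    calc q ^ i * (1 - q) ^ (n - i) ≤ 1 * 1 :=
          mul_le_mul hq hq' (pow_nonneg (by linarith) _) zero_le_one
      _ = 1 := by ring
  calc (n.choose i : ℝ) * q ^ i * (1 - q) ^ (n - i)
      = (n.choose i : ℝ) * (q ^ i * (1 - q) ^ (n - i)) := by ring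
    _ ≤ (n.choose i : ℝ) * 1 := mul_le_mul_of_nonneg_left h2 (Nat.cast_nonneg _)
    _ = (n.choose i : ℝ) := mul_one _

lemma binomCDF_measurable (n : ℕ) (c : ℤ) : Measurable (fun q : ℝ => binomCDF n q c) := by
  unfold binomCDF binomPMF
  exact Finset.measurable_sum _ fun i _ => by fun_prop

/-- Non-monotonicity of the Monte Carlo power: if Q takes values in (0,1] with
P(Q < 1) > 0 and B ≥ 2 satisfies a jump at B followed by a plateau at B+1,
then Pow(B-1) < Pow(B) and Pow(B+1) < Pow(B). -/
theorem stmt_19 {Ω : Type*} [MeasurableSpace Ω] (μ : Measure Ω)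
    [IsProbabilityMeasure μ] (Q : Ω → ℝ) (hQmeas : Measurable Q)
    (hQrange : ∀ ω, Q ω ∈ Set.Ioc (0 : ℝ) 1)
    (hQnd : 0 < μ {ω | Q ω < 1})
    (α : ℝ) (hα0 : 0 < α) (hα1 : α < 1) (B : ℕ) (hB : 2 ≤ B)
    (hjump : critCount α B - critCount α (B - 1) = 1)
    (hplateau : critCount α (B + 1) - critCount α B = 0) :
    power μ Q α (B - 1) < power μ Q α B ∧
    power μ Q α (B + 1) < power μ Q α B := by
  obtain ⟨k, hkdef⟩ : ∃ k, critCount α B = k := ⟨_, rfl⟩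
  rw [hkdef] at hjump hplateau
  have hkm1 : critCount α (B-1) = k - 1 := by omega
  have hkp1 : critCount α (B+1) = k := by omega
  -- k ≥ 0
  have hfl : (0:ℤ) ≤ ⌊(((B-1 : ℕ) : ℝ) + 1) * α⌋ := by
    apply Int.floor_nonneg.mpr
    positivity
  have hk0 : 0 ≤ k := by
    have : critCount α (B-1) = ⌊(((B-1 : ℕ) : ℝ) + 1) * α⌋ - 1 := rfl
    omega
  -- k + 1 ≤ B
  have hkB : k + 1 ≤ (B : ℤ) := by
    have hlt : ((B:ℝ) + 1) * α < ((B:ℤ) + 1 : ℤ) := by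
      push_cast
      have hBpos : (0:ℝ) < (B:ℝ) := by exact_mod_cast (show 0 < B by omega)
      nlinarith
    have := Int.floor_lt.mpr hlt
    have hkk : ⌊((B:ℝ) + 1) * α⌋ - 1 = k := hkdef
    omega
  obtain ⟨K, hKk⟩ : ∃ K : ℕ, (K : ℤ) = k := ⟨k.toNat, Int.toNat_of_nonneg hk0⟩
  have hKB : K + 1 ≤ B := by omega
  have hB1 : (B - 1) + 1 = B := by omega
  -- rewrite CDFs as explicit finite sums
  have e1 : ∀ q, binomCDF B q k = ∑ i ∈ Finset.range (K+1), binomPMF B q i := by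
    intro q
    unfold binomCDF
    have h : (k+1).toNat = K+1 := by omega
    rw [h]
  have e2 : ∀ q, binomCDF (B-1) q (k-1) = ∑ i ∈ Finset.range K, binomPMF (B-1) q i := by
    intro q
    unfold binomCDF
    have h : (k-1+1).toNat = K := by omega
    rw [h]
  have e3 : ∀ q, binomCDF (B+1) q k = ∑ i ∈ Finset.range (K+1), binomPMF (B+1) q i := by
    intro q
    unfold binomCDF
    have h : (k+1).toNat = K+1 := by omega
    rw [h]
  -- pointwise difference identities
  have diff1 : ∀ q : ℝ, binomCDF B q k - binomCDF (B-1) q (k-1)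
      = (1 - q) * binomPMF (B-1) q K := by
    intro q
    rw [e1, e2]
    have h := cdf_succ (B-1) K q
    rw [hB1] at h
    rw [h, Finset.sum_range_succ]
    ring
  have diff2 : ∀ q : ℝ, binomCDF B q k - binomCDF (B+1) q k
      = q * binomPMF B q K := by
    intro q
    rw [e1, e3]
    have h := cdf_succ B K q
    rw [h]
    ring
  -- integrability
  have hint : ∀ (n : ℕ) (c : ℤ), Integrable (fun ω => binomCDF n (Q ω) c) μ := by
    intro n c
    apply Integrable.mono' (integrable_const (∑ i ∈ Finset.range (c+1).toNat, (n.choose i : ℝ)))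
    · exact ((binomCDF_measurable n c).comp hQmeas).aestronglyMeasurable
    · filter_upwards with ω
      have h0 := (hQrange ω).1.le
      have h1 := (hQrange ω).2
      calc |binomCDF n (Q ω) c|
          ≤ ∑ i ∈ Finset.range (c+1).toNat, |binomPMF n (Q ω) i| :=
            Finset.abs_sum_le_sum_abs _ _
        _ ≤ ∑ i ∈ Finset.range (c+1).toNat, (n.choose i : ℝ) := by
            apply Finset.sum_le_sum
            intro i _
            rw [abs_of_nonneg (pmf_nonneg n h0 h1 i)]
            exact pmf_le n h0 h1 i
  -- positivity of integrals of the differences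
  have key : ∀ (f : Ω → ℝ), Integrable f μ → (∀ ω, 0 ≤ f ω) →
      (∀ ω, Q ω < 1 → f ω ≠ 0) → 0 < ∫ ω, f ω ∂μ := by
    intro f hfi hfnn hfp
    rw [integral_pos_iff_support_of_nonneg (fun ω => hfnn ω) hfi]
    calc 0 < μ {ω | Q ω < 1} := hQnd
      _ ≤ μ (Function.support f) := by
          apply measure_mono
          intro ω hω
          exact hfp ω hω
  constructor
  · -- power (B-1) < power B
    have hsub : power μ Q α B - power μ Q α (B-1)
        = ∫ ω, (1 - Q ω) * binomPMF (B-1) (Q ω) K ∂μ := by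
      unfold power
      rw [hkm1, hkdef, ← integral_sub (hint B k) (hint (B-1) (k-1))]
      exact integral_congr_ae (Filter.Eventually.of_forall fun ω => diff1 (Q ω))
    have hfi : Integrable (fun ω => (1 - Q ω) * binomPMF (B-1) (Q ω) K) μ := by
      have : (fun ω => (1 - Q ω) * binomPMF (B-1) (Q ω) K)
          = fun ω => binomCDF B (Q ω) k - binomCDF (B-1) (Q ω) (k-1) :=
        funext fun ω => (diff1 (Q ω)).symm
      rw [this]
      exact (hint B k).sub (hint (B-1) (k-1))
    have hpos : 0 < ∫ ω, (1 - Q ω) * binomPMF (B-1) (Q ω) K ∂μ := by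
      apply key _ hfi
      · intro ω
        have h1 := (hQrange ω).2
        exact mul_nonneg (by linarith) (pmf_nonneg _ (hQrange ω).1.le h1 K)
      · intro ω hω
        have h0 := (hQrange ω).1
        have : 0 < (1 - Q ω) * binomPMF (B-1) (Q ω) K :=
          mul_pos (by linarith) (pmf_pos _ h0 hω (by omega))
        linarith
    linarith
  · -- power (B+1) < power B
    have hsub : power μ Q α B - power μ Q α (B+1)
        = ∫ ω, Q ω * binomPMF B (Q ω) K ∂μ := by
      unfold power
      rw [hkp1, hkdef, ← integral_sub (hint B k) (hint (B+1) k)]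
      exact integral_congr_ae (Filter.Eventually.of_forall fun ω => diff2 (Q ω))
    have hfi : Integrable (fun ω => Q ω * binomPMF B (Q ω) K) μ := by
      have : (fun ω => Q ω * binomPMF B (Q ω) K)
          = fun ω => binomCDF B (Q ω) k - binomCDF (B+1) (Q ω) k :=
        funext fun ω => (diff2 (Q ω)).symm
      rw [this]
      exact (hint B k).sub (hint (B+1) k)
    have hpos : 0 < ∫ ω, Q ω * binomPMF B (Q ω) K ∂μ := by
      apply key _ hfi
      · intro ω
        exact mul_nonneg (hQrange ω).1.le (pmf_nonneg _ (hQrange ω).1.le (hQrange ω).2 K)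
      · intro ω hω
        have h0 := (hQrange ω).1
        have : 0 < Q ω * binomPMF B (Q ω) K :=
          mul_pos h0 (pmf_pos _ h0 hω (by omega))
        linarith
    linarith
end
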